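/- arXiv:2107.01336 — 2 statements merged into one kernel-verified Lean document; each statement's English description precedes it below -/
import Mathlib

section
/- Let T be a bounded linear operator on H admitting an A-adjoint T♯. Then w_A(T) ≥ ‖T‖_A/2 + | ‖Re_A(T) + Im_A(T)‖_A − ‖Re_A(T) − Im_A(T)‖_A | / (2√2). -/
/-! Factor `A = B* B`, so that `⟨x, y⟩_A = ⟨B x, B y⟩` and `‖x‖_A = ‖B x‖`. Put
`R = Re_A T` and `J = Im_A T`; both are `A`-selfadjoint and `T = R + i J`, so `⟨R x, x⟩_A` and
`⟨J x, x⟩_A` are real and `|⟨(R ± J) x, x⟩_A| ≤ √2 |⟨T x, x⟩_A|`. For an `A`-selfadjoint operator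
polarization bounds the `A`-norm by the `A`-numerical radius, hence `a = ‖R + J‖_A` and
`b = ‖R - J‖_A` are at most `√2 w_A(T)`, while `2 T = (1 + i)(R + J) + (1 - i)(R - J)` gives
`‖T‖_A ≤ (a + b) / √2`, and so
`√2 w_A(T) ≥ max a b = (a + b) / 2 + |a - b| / 2 ≥ ‖T‖_A / √2 + |a - b| / 2`.

The suprema are finite because an `A`-selfadjoint `S` satisfies `‖S x‖_A ≤ ‖S‖ ‖x‖_A`: the
sequence `n ↦ ‖Sⁿ x‖_A` is log-convex, as `‖Sⁿ⁺¹ x‖_A² = ⟨Sⁿ x, Sⁿ⁺² x⟩_A`, and grows at most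
like `‖S‖ⁿ`. -/

noncomputable section

open Complex ContinuousLinearMap

variable {H : Type*} [NormedAddCommGroup H] [InnerProductSpace ℂ H] [CompleteSpace H]

/-- The `A`-inner product `⟨x, y⟩_A = ⟨A x, y⟩`. -/
def innA (A : H →L[ℂ] H) (x y : H) : ℂ := @inner ℂ _ _ (A x) y

/-- The `A`-seminorm `‖x‖_A = √⟨A x, x⟩`. -/
def vnormA (A : H →L[ℂ] H) (x : H) : ℝ := Real.sqrt (innA A x x).re

/-- The `A`-operator seminorm `‖T‖_A = sup {‖T x‖_A : ‖x‖_A = 1}`. -/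
def opnormA (A T : H →L[ℂ] H) : ℝ :=
  sSup {r : ℝ | ∃ x : H, vnormA A x = 1 ∧ r = vnormA A (T x)}

/-- The `A`-numerical radius `w_A(T) = sup {|⟨T x, x⟩_A| : ‖x‖_A = 1}`. -/
def wA (A T : H →L[ℂ] H) : ℝ :=
  sSup {r : ℝ | ∃ x : H, vnormA A x = 1 ∧ r = ‖innA A (T x) x‖}

/-- The `A`-numerical range `W_A(T) = {⟨T x, x⟩_A : ‖x‖_A = 1}`. -/
def WA (A T : H →L[ℂ] H) : Set ℂ :=
  {z : ℂ | ∃ x : H, vnormA A x = 1 ∧ z = innA A (T x) x}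

/-- `Re_A(T) = (T + T♯)/2`, given an `A`-adjoint `Ts` of `T`. -/
def ReA (T Ts : H →L[ℂ] H) : H →L[ℂ] H := (2 : ℂ)⁻¹ • (T + Ts)

/-- `Im_A(T) = (T - T♯)/(2i)`, given an `A`-adjoint `Ts` of `T`. -/
def ImA (T Ts : H →L[ℂ] H) : H →L[ℂ] H := (2 * Complex.I)⁻¹ • (T - Ts)

/-- `Ts` is an `A`-adjoint of `T`, i.e. `A ∘ Ts = T* ∘ A`. -/
def IsAAdjoint (A T Ts : H →L[ℂ] H) : Prop :=
  A.comp Ts = (ContinuousLinearMap.adjoint T).comp A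

open scoped InnerProductSpace ComplexConjugate

theorem le_of_forall_pow_le_mul_pow {a b K : ℝ} (hb : 0 ≤ b)
    (h : ∀ n : ℕ, a ^ n ≤ K * b ^ n) : a ≤ b := by
  by_contra! hba
  obtain rfl | hb := hb.eq_or_lt
  · linarith [h 1, pow_one a]
  obtain ⟨n, hn⟩ := pow_unbounded_of_one_lt K ((one_lt_div hb).2 hba)
  have := (mul_lt_mul_of_pos_right hn (pow_pos hb n)).trans_eq
    (by rw [div_pow, div_mul_cancel₀ _ (pow_ne_zero n hb.ne')])
  linarith [h n]

theorem le_mul_of_sq_le_mul_of_le_mul_pow {f : ℕ → ℝ} {C s : ℝ} (hf : ∀ n, 0 ≤ f n) (hs : 0 ≤ s)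
    (hconv : ∀ n, f (n + 1) ^ 2 ≤ f n * f (n + 2)) (hgrowth : ∀ n, f n ≤ C * s ^ n) :
    f 1 ≤ s * f 0 := by
  obtain h0 | h0 := (hf 0).eq_or_lt
  · have : f 1 ^ 2 ≤ 0 := by simpa [← h0] using hconv 0
    rw [← h0, mul_zero]
    nlinarith
  set r := f 1 / f 0
  have hr : 0 ≤ r := div_nonneg (hf 1) h0.le
  have hratio : ∀ n, r * f n ≤ f (n + 1) := by
    intro n
    induction n with
    | zero => rw [div_mul_cancel₀ _ h0.ne']
    | succ n ih =>
      obtain hn | hn := (hf (n + 1)).eq_or_lt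
      · rw [← hn, mul_zero]; exact hf _
      nlinarith [hconv n, hf n, hf (n + 2), mul_le_mul_of_nonneg_left ih hn.le]
  have hgeom : ∀ n, r ^ n * f 0 ≤ f n := by
    intro n
    induction n with
    | zero => simp
    | succ n ih =>
      calc r ^ (n + 1) * f 0 = r * (r ^ n * f 0) := by ring
        _ ≤ r * f n := mul_le_mul_of_nonneg_left ih hr
        _ ≤ f (n + 1) := hratio n
  have hrs : r ≤ s := le_of_forall_pow_le_mul_pow hs fun n => by
    rw [div_mul_eq_mul_div, le_div_iff₀ h0]
    exact (hgeom n).trans (hgrowth n)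
  calc f 1 = r * f 0 := (div_mul_cancel₀ _ h0.ne').symm
    _ ≤ s * f 0 := mul_le_mul_of_nonneg_right hrs h0.le

theorem abs_add_le_sqrt_two_mul_sqrt (p q : ℝ) : |p + q| ≤ √2 * √(p ^ 2 + q ^ 2) := by
  rw [← Real.sqrt_mul zero_le_two, ← Real.sqrt_sq_eq_abs]
  exact Real.sqrt_le_sqrt (by nlinarith [sq_nonneg (p - q)])

section Symmetric

variable {𝕜 E F : Type*} [RCLike 𝕜] [NormedAddCommGroup E] [NormedSpace 𝕜 E]
  [NormedAddCommGroup F] [InnerProductSpace 𝕜 F] {B : E →L[𝕜] F} {S : E →L[𝕜] E}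

theorem norm_apply_apply_le_of_inner_symm (hS : ∀ x y, ⟪B (S x), B y⟫_𝕜 = ⟪B x, B (S y)⟫_𝕜)
    (x : E) : ‖B (S x)‖ ≤ ‖S‖ * ‖B x‖ := by
  have hiter : ∀ n, (⇑S)^[n + 1] x = S ((⇑S)^[n] x) := fun n => Function.iterate_succ_apply' _ _ _
  refine le_mul_of_sq_le_mul_of_le_mul_pow (f := fun n => ‖B ((⇑S)^[n] x)‖) (C := ‖B‖ * ‖x‖)
    (fun _ => norm_nonneg _) (norm_nonneg _) (fun n => ?_) (fun n => ?_)
  · rw [← inner_self_eq_norm_sq (𝕜 := 𝕜), hiter n, hS, ← hiter, ← hiter]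
    exact (RCLike.re_le_norm _).trans (norm_inner_le_norm _ _)
  · calc ‖B ((⇑S)^[n] x)‖ ≤ ‖B‖ * ‖(⇑S)^[n] x‖ := B.le_opNorm _
      _ ≤ ‖B‖ * (‖S‖ ^ n * ‖x‖) := by
        gcongr
        simpa using (S.lipschitz.iterate n).norm_le_mul (Function.iterate_fixed (map_zero S) n) x
      _ = ‖B‖ * ‖x‖ * ‖S‖ ^ n := by ring

theorem norm_apply_apply_le_of_norm_inner_le (hS : ∀ x y, ⟪B (S x), B y⟫_𝕜 = ⟪B x, B (S y)⟫_𝕜)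
    {c : ℝ} (hc : 0 ≤ c) (h : ∀ z, ‖⟪B (S z), B z⟫_𝕜‖ ≤ c * ‖B z‖ ^ 2) (x : E) :
    ‖B (S x)‖ ≤ c * ‖B x‖ := by
  have hpolar : ∀ y, 4 * RCLike.re ⟪B (S x), B y⟫_𝕜 ≤ 2 * c * (‖B x‖ ^ 2 + ‖B y‖ ^ 2) := by
    intro y
    have hre : RCLike.re ⟪B (S (x + y)), B (x + y)⟫_𝕜 - RCLike.re ⟪B (S (x - y)), B (x - y)⟫_𝕜
        = 4 * RCLike.re ⟪B (S x), B y⟫_𝕜 := by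
      have : RCLike.re ⟪B (S y), B x⟫_𝕜 = RCLike.re ⟪B (S x), B y⟫_𝕜 := by
        rw [hS, ← inner_conj_symm, RCLike.conj_re]
      simp only [map_add, map_sub, inner_add_left, inner_add_right, inner_sub_left,
        inner_sub_right]
      linarith
    have hpar := parallelogram_law_with_norm 𝕜 (B x) (B y)
    rw [← map_add, ← map_sub] at hpar
    have h1 := (RCLike.re_le_norm _).trans (h (x + y))
    have h2 := (neg_le_abs _).trans <| (RCLike.abs_re_le_norm _).trans (h (x - y))
    nlinarith
  have hquad : ∀ t : ℝ, 0 ≤ (2 * c * ‖B (S x)‖ ^ 2) * (t * t) + (-4 * ‖B (S x)‖ ^ 2) * t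
      + 2 * c * ‖B x‖ ^ 2 := by
    intro t
    have := hpolar ((t : 𝕜) • S x)
    rw [map_smul, inner_smul_right, RCLike.re_ofReal_mul, inner_self_eq_norm_sq, norm_smul,
      RCLike.norm_ofReal, mul_pow, sq_abs] at this
    linarith
  have hdisc := discrim_le_zero hquad
  rw [discrim] at hdisc
  obtain hm | hm := (norm_nonneg (B (S x))).eq_or_lt
  · rw [← hm]; positivity
  refine le_of_pow_le_pow_left₀ two_ne_zero (by positivity) ?_
  nlinarith [pow_pos hm 2]

end Symmetric

section Seminorm

variable {E : Type*} [NormedAddCommGroup E] [InnerProductSpace ℂ E] {A S : E →L[ℂ] E}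

theorem vnormA_smul (A : E →L[ℂ] E) (c : ℂ) (x : E) : vnormA A (c • x) = ‖c‖ * vnormA A x := by
  have : (innA A (c • x) (c • x)).re = ‖c‖ ^ 2 * (innA A x x).re := by
    rw [innA, innA, map_smul, inner_smul_left, inner_smul_right, ← mul_assoc,
      Complex.conj_mul', ← Complex.ofReal_pow, Complex.re_ofReal_mul]
  rw [vnormA, vnormA, this, Real.sqrt_mul (by positivity), Real.sqrt_sq (norm_nonneg c)]

theorem vnormA_nonneg (A : E →L[ℂ] E) (x : E) : 0 ≤ vnormA A x := Real.sqrt_nonneg _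

-- Pitfall: `sSup` of a set of reals that is unbounded above is `0`.
theorem le_sSup_mul_pow_vnormA {f : E → ℝ} {k : ℕ} (hk : k ≠ 0)
    (hf : ∀ (c : ℂ) x, f (c • x) = ‖c‖ ^ k * f x) (hbdd : ∃ C, ∀ x, f x ≤ C * vnormA A x ^ k)
    (x : E) : f x ≤ sSup {r | ∃ y, vnormA A y = 1 ∧ r = f y} * vnormA A x ^ k := by
  obtain ⟨C, hC⟩ := hbdd
  obtain h0 | hpos := (vnormA_nonneg A x).eq_or_lt
  · simpa [← h0, zero_pow hk] using hC x
  set y := ((vnormA A x)⁻¹ : ℂ) • x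
  have hnorm : ‖((vnormA A x)⁻¹ : ℂ)‖ = (vnormA A x)⁻¹ := by
    rw [← Complex.ofReal_inv, Complex.norm_real, Real.norm_of_nonneg (inv_nonneg.2 hpos.le)]
  have hy : vnormA A y = 1 := by rw [vnormA_smul, hnorm, inv_mul_cancel₀ hpos.ne']
  have hbdd : BddAbove {r | ∃ y, vnormA A y = 1 ∧ r = f y} := by
    refine ⟨C, ?_⟩
    rintro _ ⟨z, hz, rfl⟩
    simpa [hz] using hC z
  have hle : f y ≤ sSup {r | ∃ y, vnormA A y = 1 ∧ r = f y} := le_csSup hbdd ⟨y, hy, rfl⟩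
  calc f x = vnormA A x ^ k * f y := by
        rw [hf, hnorm, ← mul_assoc, ← mul_pow, mul_inv_cancel₀ hpos.ne', one_pow, one_mul]
    _ ≤ sSup {r | ∃ y, vnormA A y = 1 ∧ r = f y} * vnormA A x ^ k := by
        rw [mul_comm]; exact mul_le_mul_of_nonneg_right hle (by positivity)

theorem vnormA_apply_le_opnormA_mul (hbdd : ∃ C, ∀ x, vnormA A (S x) ≤ C * vnormA A x)
    (x : E) : vnormA A (S x) ≤ opnormA A S * vnormA A x := by
  simpa [opnormA] using le_sSup_mul_pow_vnormA (f := fun x => vnormA A (S x)) one_ne_zero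
    (fun c x => by simp [vnormA_smul]) (by simpa using hbdd) x

theorem norm_innA_apply_self_le_wA_mul
    (hbdd : ∃ C, ∀ x, ‖innA A (S x) x‖ ≤ C * vnormA A x ^ 2) (x : E) :
    ‖innA A (S x) x‖ ≤ wA A S * vnormA A x ^ 2 :=
  le_sSup_mul_pow_vnormA (f := fun x => ‖innA A (S x) x‖) two_ne_zero
    (fun c x => by
      simp only [innA, map_smul, inner_smul_left, inner_smul_right, norm_mul, Complex.norm_conj]
      ring) hbdd x

theorem opnormA_le {c : ℝ} (hc : 0 ≤ c) (h : ∀ x, vnormA A (S x) ≤ c * vnormA A x) :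
    opnormA A S ≤ c :=
  Real.sSup_le (by rintro _ ⟨x, hx, rfl⟩; simpa [hx] using h x) hc

theorem opnormA_nonneg : 0 ≤ opnormA A S :=
  Real.sSup_nonneg (by rintro _ ⟨x, -, rfl⟩; exact vnormA_nonneg A _)

theorem wA_nonneg : 0 ≤ wA A S :=
  Real.sSup_nonneg (by rintro _ ⟨x, -, rfl⟩; exact norm_nonneg _)

theorem ReA_add_I_smul_ImA (T Ts : E →L[ℂ] E) : ReA T Ts + I • ImA T Ts = T := by
  rw [ReA, ImA, smul_smul, mul_inv_rev, ← mul_assoc, mul_inv_cancel₀ I_ne_zero, one_mul]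
  module

end Seminorm

section Hilbert

variable {A R J S S' T Ts : H →L[ℂ] H}

theorem exists_innA_eq_inner (hA : A.IsPositive) :
    ∃ B : H →L[ℂ] H, (∀ x y, innA A x y = ⟪B x, B y⟫_ℂ) ∧ ∀ x, vnormA A x = ‖B x‖ := by
  obtain ⟨B, hB⟩ := CStarAlgebra.nonneg_iff_eq_star_mul_self.mp ((A.nonneg_iff_isPositive).2 hA)
  have hinner : ∀ x y, innA A x y = ⟪B x, B y⟫_ℂ := fun x y => by
    rw [innA, hB, star_eq_adjoint, mul_apply_eq_comp, adjoint_inner_left]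
  refine ⟨B, hinner, fun x => ?_⟩
  have := inner_self_eq_norm_sq (𝕜 := ℂ) (B x)
  rw [vnormA, hinner, ← RCLike.re_to_complex, this, Real.sqrt_sq (norm_nonneg _)]

theorem norm_innA_le (hA : A.IsPositive) (x y : H) : ‖innA A x y‖ ≤ vnormA A x * vnormA A y := by
  obtain ⟨B, hinner, hnorm⟩ := exists_innA_eq_inner hA
  rw [hinner, hnorm, hnorm]
  exact norm_inner_le_norm _ _

theorem innA_conj (hA : IsSelfAdjoint A) (x y : H) : conj (innA A x y) = innA A y x := by
  rw [innA, innA, inner_conj_symm, ← adjoint_inner_left, ← star_eq_adjoint, hA.star_eq]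

namespace IsAAdjoint

theorem add (hS : IsAAdjoint A S S') (hT : IsAAdjoint A T Ts) : IsAAdjoint A (S + T) (S' + Ts) := by
  rw [IsAAdjoint, map_add, comp_add, add_comp, hS, hT]

theorem sub (hS : IsAAdjoint A S S') (hT : IsAAdjoint A T Ts) : IsAAdjoint A (S - T) (S' - Ts) := by
  rw [IsAAdjoint, map_sub, comp_sub, sub_comp, hS, hT]

theorem innA_apply_left (hS : IsAAdjoint A S S) (x y : H) : innA A (S x) y = innA A x (S y) := by
  rw [innA, innA, ← comp_apply, hS, comp_apply, adjoint_inner_left]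

theorem ofReal_re_innA (hA : IsSelfAdjoint A) (hS : IsAAdjoint A S S) (x : H) :
    ((innA A (S x) x).re : ℂ) = innA A (S x) x := by
  rw [← Complex.conj_eq_iff_re, innA_conj hA, hS.innA_apply_left]

theorem symm (hA : IsSelfAdjoint A) (h : IsAAdjoint A T Ts) : IsAAdjoint A Ts T := by
  have := congrArg adjoint h
  rw [adjoint_comp, adjoint_comp, adjoint_adjoint, ← star_eq_adjoint A, hA.star_eq] at this
  exact this.symm

theorem smul (h : IsAAdjoint A T Ts) (c : ℂ) : IsAAdjoint A (c • T) (conj c • Ts) := by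
  rw [IsAAdjoint, comp_smul, h, map_smulₛₗ, smul_comp]

theorem reA (hA : IsSelfAdjoint A) (h : IsAAdjoint A T Ts) :
    IsAAdjoint A (ReA T Ts) (ReA T Ts) := by
  have := ((h.add (h.symm hA)).smul (2 : ℂ)⁻¹)
  rwa [add_comm Ts, map_inv₀, map_ofNat] at this

theorem imA (hA : IsSelfAdjoint A) (h : IsAAdjoint A T Ts) :
    IsAAdjoint A (ImA T Ts) (ImA T Ts) := by
  have := ((h.sub (h.symm hA)).smul (2 * I)⁻¹)
  rwa [map_inv₀, map_mul, map_ofNat, conj_I, mul_neg, inv_neg, neg_smul, ← smul_neg,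
    neg_sub] at this

theorem vnormA_apply_le (hA : A.IsPositive) (hS : IsAAdjoint A S S) (x : H) :
    vnormA A (S x) ≤ ‖S‖ * vnormA A x := by
  obtain ⟨B, hinner, hnorm⟩ := exists_innA_eq_inner hA
  rw [hnorm, hnorm]
  exact norm_apply_apply_le_of_inner_symm
    (fun x y => by simpa only [hinner] using hS.innA_apply_left x y) x

theorem vnormA_apply_le_of_norm_innA_le (hA : A.IsPositive) (hS : IsAAdjoint A S S) {c : ℝ}
    (hc : 0 ≤ c) (h : ∀ z, ‖innA A (S z) z‖ ≤ c * vnormA A z ^ 2) (x : H) :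
    vnormA A (S x) ≤ c * vnormA A x := by
  obtain ⟨B, hinner, hnorm⟩ := exists_innA_eq_inner hA
  simp only [hinner, hnorm] at h ⊢
  exact norm_apply_apply_le_of_norm_inner_le
    (fun x y => by simpa only [hinner] using hS.innA_apply_left x y) hc h x

theorem vnormA_apply_le_opnormA_mul (hA : A.IsPositive) (hS : IsAAdjoint A S S) (x : H) :
    vnormA A (S x) ≤ opnormA A S * vnormA A x :=
  _root_.vnormA_apply_le_opnormA_mul ⟨‖S‖, hS.vnormA_apply_le hA⟩ x

end IsAAdjoint

theorem norm_innA_add_and_sub_le (hA : IsSelfAdjoint A) (hR : IsAAdjoint A R R)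
    (hJ : IsAAdjoint A J J) (x : H) :
    ‖innA A ((R + J) x) x‖ ≤ √2 * ‖innA A ((R + I • J) x) x‖ ∧
      ‖innA A ((R - J) x) x‖ ≤ √2 * ‖innA A ((R + I • J) x) x‖ := by
  have hp := hR.ofReal_re_innA hA x
  have hq := hJ.ofReal_re_innA hA x
  set p := (innA A (R x) x).re
  set q := (innA A (J x) x).re
  simp only [innA] at hp hq
  have hT : ‖innA A ((R + I • J) x) x‖ = √(p ^ 2 + (-q) ^ 2) := by
    rw [← Complex.norm_add_mul_I]
    simp only [innA, add_apply, smul_apply, map_add, map_smul, inner_add_left, inner_smul_left,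
      conj_I, ← hp, ← hq]
    push_cast; ring_nf
  rw [hT, neg_sq]
  constructor
  · simp only [innA, add_apply, map_add, inner_add_left, ← hp, ← hq]
    rw [← ofReal_add, norm_real, Real.norm_eq_abs]
    exact abs_add_le_sqrt_two_mul_sqrt p q
  · simp only [innA, sub_apply, map_sub, inner_sub_left, ← hp, ← hq]
    rw [← ofReal_sub, norm_real, Real.norm_eq_abs, sub_eq_add_neg, ← neg_sq q]
    exact abs_add_le_sqrt_two_mul_sqrt p (-q)

theorem vnormA_add_I_smul_apply_le (hA : A.IsPositive) (hR : IsAAdjoint A R R)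
    (hJ : IsAAdjoint A J J) (x : H) :
    vnormA A ((R + I • J) x) ≤ (opnormA A (R + J) + opnormA A (R - J)) / √2 * vnormA A x := by
  have ha := (hR.add hJ).vnormA_apply_le_opnormA_mul hA x
  have hb := (hR.sub hJ).vnormA_apply_le_opnormA_mul hA x
  obtain ⟨B, -, hnorm⟩ := exists_innA_eq_inner hA
  simp only [hnorm] at ha hb ⊢
  have hdecomp :
      (2 : ℂ) • B ((R + I • J) x) = (1 + I) • B ((R + J) x) + (1 - I) • B ((R - J) x) := by
    simp only [add_apply, sub_apply, smul_apply, map_add, map_sub, map_smul]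
    module
  have hnorm_add : ‖(1 + I : ℂ)‖ = √2 := by
    simpa [one_add_one_eq_two] using Complex.norm_add_mul_I 1 1
  have hnorm_sub : ‖(1 - I : ℂ)‖ = √2 := by
    simpa [sub_eq_add_neg, one_add_one_eq_two] using Complex.norm_add_mul_I 1 (-1)
  have h2 :
      2 * ‖B ((R + I • J) x)‖ ≤ √2 * ((opnormA A (R + J) + opnormA A (R - J)) * ‖B x‖) := by
    calc 2 * ‖B ((R + I • J) x)‖ = ‖(1 + I) • B ((R + J) x) + (1 - I) • B ((R - J) x)‖ := by
          rw [← hdecomp, norm_smul]; norm_num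
      _ ≤ √2 * ‖B ((R + J) x)‖ + √2 * ‖B ((R - J) x)‖ := by
          refine (norm_add_le _ _).trans_eq ?_
          rw [norm_smul, norm_smul, hnorm_add, hnorm_sub]
      _ ≤ √2 * ((opnormA A (R + J) + opnormA A (R - J)) * ‖B x‖) := by
          rw [add_mul, mul_add]; gcongr
  rw [div_mul_eq_mul_div, le_div_iff₀ (by positivity)]
  have := mul_le_mul_of_nonneg_left h2 (Real.sqrt_nonneg 2)
  rw [← mul_assoc (√2) (√2), Real.mul_self_sqrt zero_le_two] at this
  linarith

theorem le_wA_add_I_smul (hA : A.IsPositive) (hR : IsAAdjoint A R R) (hJ : IsAAdjoint A J J) :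
    opnormA A (R + I • J) / 2 + |opnormA A (R + J) - opnormA A (R - J)| / (2 * √2)
      ≤ wA A (R + I • J) := by
  set w := wA A (R + I • J)
  set a := opnormA A (R + J)
  set b := opnormA A (R - J)
  have hT := vnormA_add_I_smul_apply_le hA hR hJ
  have hw : ∀ x, ‖innA A ((R + I • J) x) x‖ ≤ w * vnormA A x ^ 2 := by
    refine norm_innA_apply_self_le_wA_mul ⟨(a + b) / √2, fun x => ?_⟩
    rw [sq, ← mul_assoc]
    exact (norm_innA_le hA _ _).trans (mul_le_mul_of_nonneg_right (hT x) (vnormA_nonneg A x))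
  have hc : 0 ≤ √2 * w := mul_nonneg (Real.sqrt_nonneg 2) wA_nonneg
  have ha : a ≤ √2 * w := opnormA_le hc <| (hR.add hJ).vnormA_apply_le_of_norm_innA_le hA hc
    fun z => (norm_innA_add_and_sub_le hA.isSelfAdjoint hR hJ z).1.trans <| by
      rw [mul_assoc]; gcongr; exact hw z
  have hb : b ≤ √2 * w := opnormA_le hc <| (hR.sub hJ).vnormA_apply_le_of_norm_innA_le hA hc
    fun z => (norm_innA_add_and_sub_le hA.isSelfAdjoint hR hJ z).2.trans <| by
      rw [mul_assoc]; gcongr; exact hw z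
  have ht : opnormA A (R + I • J) ≤ (a + b) / √2 :=
    opnormA_le (div_nonneg (add_nonneg opnormA_nonneg opnormA_nonneg) (Real.sqrt_nonneg 2)) hT
  -- `a + b + |a - b| = 2 max a b`
  have hmax : a + b + |a - b| ≤ 2 * (√2 * w) := by
    rcases abs_cases (a - b) with ⟨h, -⟩ | ⟨h, -⟩ <;> linarith
  calc opnormA A (R + I • J) / 2 + |a - b| / (2 * √2)
      ≤ (a + b) / √2 / 2 + |a - b| / (2 * √2) := by gcongr
    _ = (a + b + |a - b|) / (2 * √2) := by field_simp
    _ ≤ 2 * (√2 * w) / (2 * √2) := by gcongr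
    _ = w := by field_simp

end Hilbert

theorem stmt10 (A T Ts : H →L[ℂ] H) (hA : A.IsPositive) (hTs : IsAAdjoint A T Ts) :
    wA A T ≥ opnormA A T / 2 +
      |opnormA A (ReA T Ts + ImA T Ts) - opnormA A (ReA T Ts - ImA T Ts)| / (2 * Real.sqrt 2) := by
  have := le_wA_add_I_smul hA (hTs.reA hA.isSelfAdjoint) (hTs.imA hA.isSelfAdjoint)
  rwa [ReA_add_I_smul_ImA] at this
end
end

section
/- Let T be a bounded linear operator on H admitting an A-adjoint T♯. Then w_A(T) ≥ (1/√2)‖Re_A(T) + Im_A(T)‖_A and w_A(T) ≥ (1/√2)‖Re_A(T) − Im_A(T)‖_A. -/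
/-!
Writing `A = √A ∘ √A` turns the `A`-semi-inner product into `⟪√A x, √A y⟫`, so every estimate
is an ordinary Hilbert-space estimate for the vectors `√A x`.

Both `Re_A(T) + Im_A(T)` and `Re_A(T) - Im_A(T)` are `A`-selfadjoint, and their `A`-quadratic
forms are `Re z ∓ Im z` with `z = ⟨T x, x⟩_A`, hence bounded by `√2 |z| ≤ √2 w_A(T) ‖x‖_A²`.
For an `A`-selfadjoint `S`, polarization and the parallelogram law turn such a bound on the
quadratic form into the same bound on `‖S‖_A`.

The remaining point is that `w_A(T)` is the supremum of a bounded set. Since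
`‖T x‖_A² = ⟨T♯T x, x⟩_A`, it suffices to bound `R = T♯T`, which is `A`-selfadjoint; iterating
`‖R^k x‖_A² ≤ ‖R^{2k} x‖_A ‖x‖_A` gives `‖R x‖_A^{2^n} ≤ C ‖R‖^{2^n}`, so `‖R x‖_A ≤ ‖R‖`
whenever `‖x‖_A = 1`.
-/

noncomputable section

open Complex ContinuousLinearMap

variable {H : Type*} [NormedAddCommGroup H] [InnerProductSpace ℂ H] [CompleteSpace H]

open scoped InnerProductSpace

theorem le_of_forall_pow_two_pow_le_mul_pow {a b C : ℝ} (ha : 0 ≤ a) (hb : 0 ≤ b)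
    (h : ∀ n : ℕ, a ^ 2 ^ n ≤ C * b ^ 2 ^ n) : a ≤ b := by
  by_contra! hba
  have ha0 : 0 < a := hb.trans_lt hba
  set q := b / a
  have hq0 : 0 ≤ q := div_nonneg hb ha
  have hq1 : q < 1 := (div_lt_one ha0).2 hba
  have hCq : ∀ n : ℕ, 1 ≤ C * q ^ 2 ^ n := fun n => by
    rw [div_pow, mul_div_assoc', le_div_iff₀ (by positivity), one_mul]
    exact h n
  have hC : 0 < C := by
    by_contra! hC
    linarith [hCq 0, mul_nonpos_of_nonpos_of_nonneg hC (pow_nonneg hq0 (2 ^ 0))]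
  obtain ⟨n, hn⟩ := exists_pow_lt_of_lt_one (inv_pos.2 hC) hq1
  have hqn : q ^ 2 ^ n ≤ q ^ n := pow_le_pow_of_le_one hq0 hq1.le Nat.lt_two_pow_self.le
  have := calc
    1 ≤ C * q ^ 2 ^ n := hCq n
    _ ≤ C * q ^ n := by gcongr
    _ < C * C⁻¹ := by gcongr
    _ = 1 := mul_inv_cancel₀ hC.ne'
  exact this.false

theorem Complex.abs_re_add_im_le (z : ℂ) : |z.re + z.im| ≤ √2 * ‖z‖ := by
  rw [Complex.norm_def, ← Real.sqrt_mul zero_le_two, Complex.normSq_apply]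
  exact Real.abs_le_sqrt (by nlinarith [sq_nonneg (z.re - z.im)])

theorem Complex.abs_re_sub_im_le (z : ℂ) : |z.re - z.im| ≤ √2 * ‖z‖ := by
  simpa [sub_eq_add_neg] using Complex.abs_re_add_im_le (starRingEnd ℂ z)

section SymmetricFor

variable {V E : Type*} [NormedAddCommGroup V] [NormedSpace ℂ V]
  [NormedAddCommGroup E] [InnerProductSpace ℂ E]

/-- For `P = √A` this is `A`-selfadjointness: `⟨S x, y⟩_A = ⟨x, S y⟩_A`. -/
def IsSymmetricFor (P : V →L[ℂ] E) (S : V →L[ℂ] V) : Prop :=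
  ∀ x y, ⟪P (S x), P y⟫_ℂ = ⟪P x, P (S y)⟫_ℂ

variable {P : V →L[ℂ] E}

namespace IsSymmetricFor

theorem add {S S' : V →L[ℂ] V} (hS : IsSymmetricFor P S) (hS' : IsSymmetricFor P S') :
    IsSymmetricFor P (S + S') := fun x y => by
  simp only [add_apply, map_add, inner_add_left, inner_add_right, hS x y, hS' x y]

theorem sub {S S' : V →L[ℂ] V} (hS : IsSymmetricFor P S) (hS' : IsSymmetricFor P S') :
    IsSymmetricFor P (S - S') := fun x y => by
  simp only [sub_apply, map_sub, inner_sub_left, inner_sub_right, hS x y, hS' x y]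

theorem pow {R : V →L[ℂ] V} (hR : IsSymmetricFor P R) (k : ℕ) : IsSymmetricFor P (R ^ k) := by
  induction k with
  | zero => intro x y; rfl
  | succ k ih =>
    intro x y
    rw [pow_succ, mul_apply_eq_comp, ih, hR, ← mul_apply_eq_comp, pow_mul_comm']

theorem re_inner_polarization {S : V →L[ℂ] V} (hS : IsSymmetricFor P S) (x y : V) :
    4 * (⟪P (S x), P y⟫_ℂ).re =
      (⟪P (S (x + y)), P (x + y)⟫_ℂ).re - (⟪P (S (x - y)), P (x - y)⟫_ℂ).re := by
  have hyx : (⟪P (S y), P x⟫_ℂ).re = (⟪P (S x), P y⟫_ℂ).re := by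
    rw [hS, ← inner_conj_symm, Complex.conj_re]
  simp only [map_add, map_sub, inner_add_left, inner_add_right, inner_sub_left, inner_sub_right,
    Complex.add_re, Complex.sub_re]
  linarith

variable {R : V →L[ℂ] V} {x : V}

theorem norm_apply_sq_le (hR : IsSymmetricFor P R) (hx : ‖P x‖ = 1) (k : ℕ) :
    ‖P ((R ^ k) x)‖ ^ 2 ≤ ‖P ((R ^ (2 * k)) x)‖ := calc
  ‖P ((R ^ k) x)‖ ^ 2 = (⟪P ((R ^ k) ((R ^ k) x)), P x⟫_ℂ).re := by
    rw [hR.pow k, ← inner_self_eq_norm_sq (𝕜 := ℂ)]; rfl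
  _ ≤ ‖P ((R ^ (2 * k)) x)‖ * ‖P x‖ := by
    rw [two_mul, pow_add, mul_apply_eq_comp]
    exact (Complex.re_le_norm _).trans (norm_inner_le_norm _ _)
  _ = ‖P ((R ^ (2 * k)) x)‖ := by rw [hx, mul_one]

theorem norm_apply_pow_two_pow_le (hR : IsSymmetricFor P R) (hx : ‖P x‖ = 1) (n : ℕ) :
    ‖P (R x)‖ ^ 2 ^ n ≤ ‖P ((R ^ 2 ^ n) x)‖ := by
  induction n with
  | zero => simp
  | succ n ih => calc
    ‖P (R x)‖ ^ 2 ^ (n + 1) = (‖P (R x)‖ ^ 2 ^ n) ^ 2 := by rw [pow_succ, pow_mul]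
    _ ≤ ‖P ((R ^ 2 ^ n) x)‖ ^ 2 := by gcongr
    _ ≤ ‖P ((R ^ 2 ^ (n + 1)) x)‖ := by
      rw [pow_succ' 2 n]
      exact hR.norm_apply_sq_le hx _

theorem norm_apply_le (hR : IsSymmetricFor P R) (hx : ‖P x‖ = 1) : ‖P (R x)‖ ≤ ‖R‖ := by
  refine le_of_forall_pow_two_pow_le_mul_pow (norm_nonneg _) (norm_nonneg _)
    (C := ‖P‖ * ‖x‖) fun n => (hR.norm_apply_pow_two_pow_le hx n).trans ?_
  calc ‖P ((R ^ 2 ^ n) x)‖ ≤ ‖P‖ * (‖R ^ 2 ^ n‖ * ‖x‖) :=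
        P.le_opNorm_of_le ((R ^ 2 ^ n).le_opNorm x)
    _ ≤ ‖P‖ * (‖R‖ ^ 2 ^ n * ‖x‖) := by gcongr; exact norm_pow_le' R (Nat.two_pow_pos n)
    _ = ‖P‖ * ‖x‖ * ‖R‖ ^ 2 ^ n := by ring

end IsSymmetricFor

theorem norm_inner_apply_le_mul_sq {T : V →L[ℂ] V} {B : ℝ}
    (h : ∀ x, ‖P x‖ = 1 → ‖⟪P (T x), P x⟫_ℂ‖ ≤ B) (x : V) :
    ‖⟪P (T x), P x⟫_ℂ‖ ≤ B * ‖P x‖ ^ 2 := by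
  rcases (norm_nonneg (P x)).eq_or_lt with h0 | h0
  · rw [eq_comm, norm_eq_zero] at h0
    simp [h0]
  · set c := ‖P x‖
    have hc := h ((c⁻¹ : ℂ) • x) (by
      rw [map_smul, norm_smul, norm_inv, Complex.norm_real, Real.norm_of_nonneg h0.le,
        inv_mul_cancel₀ h0.ne'])
    rw [map_smul, map_smul, map_smul, inner_smul_left, inner_smul_right, norm_mul, norm_mul,
      Complex.norm_conj, norm_inv, Complex.norm_real, Real.norm_of_nonneg h0.le, ← mul_assoc,
      ← mul_inv, ← sq, inv_mul_le_iff₀ (by positivity)] at hc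
    linarith

theorem IsSymmetricFor.norm_apply_le_of_norm_inner_le {S : V →L[ℂ] V} {B : ℝ}
    (hS : IsSymmetricFor P S) (hB : ∀ x, ‖P x‖ = 1 → ‖⟪P (S x), P x⟫_ℂ‖ ≤ B) {x : V}
    (hx : ‖P x‖ = 1) : ‖P (S x)‖ ≤ B := by
  rcases (norm_nonneg (P (S x))).eq_or_lt with h0 | h0
  · exact h0 ▸ (norm_nonneg _).trans (hB x hx)
  set a := ‖P (S x)‖
  set y := (a⁻¹ : ℂ) • S x
  have hy : ‖P y‖ = 1 := by
    rw [map_smul, norm_smul, norm_inv, Complex.norm_real, Real.norm_of_nonneg h0.le,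
      inv_mul_cancel₀ h0.ne']
  have hxy : (⟪P (S x), P y⟫_ℂ).re = a := by
    rw [map_smul, inner_smul_right, inner_self_eq_norm_sq_to_K, ← Complex.ofReal_inv,
      Complex.re_ofReal_mul]
    norm_cast
    field_simp
    exact Complex.ofReal_re _
  have hpar : B * ‖P (x + y)‖ ^ 2 + B * ‖P (x - y)‖ ^ 2 = 4 * B := by
    rw [map_add, map_sub, ← mul_add, parallelogram_law_with_norm ℂ, hx, hy]
    ring
  have hplus := (Complex.re_le_norm _).trans (norm_inner_apply_le_mul_sq hB (x + y))
  have hminus := ((neg_le_abs _).trans (Complex.abs_re_le_norm _)).trans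
    (norm_inner_apply_le_mul_sq hB (x - y))
  linarith [hS.re_inner_polarization x y]

end SymmetricFor

section AdjointA

variable {A T Ts : H →L[ℂ] H}

theorem innA_eq_inner_sqrt (hA : A.IsPositive) (x y : H) :
    innA A x y = ⟪CFC.sqrt A x, CFC.sqrt A y⟫_ℂ := by
  have hsa : IsSelfAdjoint (CFC.sqrt A) := (CFC.sqrt_nonneg A).isSelfAdjoint
  have hAx : A x = CFC.sqrt A (CFC.sqrt A x) := by
    rw [← mul_apply_eq_comp,
      CFC.sqrt_mul_sqrt_self A ((ContinuousLinearMap.nonneg_iff_isPositive A).2 hA)]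
  rw [innA, hAx, ← hsa.adjoint_eq, ContinuousLinearMap.adjoint_inner_left, hsa.adjoint_eq]

theorem vnormA_eq_norm_sqrt (hA : A.IsPositive) (x : H) : vnormA A x = ‖CFC.sqrt A x‖ := by
  rw [vnormA, innA_eq_inner_sqrt hA, inner_self_eq_norm_sq_to_K]
  norm_cast
  exact Real.sqrt_sq (norm_nonneg _)

namespace IsAAdjoint

theorem inner_sqrt_apply_left (hA : A.IsPositive) (hTs : IsAAdjoint A T Ts) (x y : H) :
    ⟪CFC.sqrt A (Ts x), CFC.sqrt A y⟫_ℂ = ⟪CFC.sqrt A x, CFC.sqrt A (T y)⟫_ℂ := by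
  rw [← innA_eq_inner_sqrt hA, ← innA_eq_inner_sqrt hA, innA, innA, ← comp_apply, hTs,
    comp_apply, adjoint_inner_left]

theorem inner_sqrt_apply_right (hA : A.IsPositive) (hTs : IsAAdjoint A T Ts) (x y : H) :
    ⟪CFC.sqrt A (T x), CFC.sqrt A y⟫_ℂ = ⟪CFC.sqrt A x, CFC.sqrt A (Ts y)⟫_ℂ := by
  rw [← inner_conj_symm, ← hTs.inner_sqrt_apply_left hA, inner_conj_symm]

theorem isSymmetricFor_comp (hA : A.IsPositive) (hTs : IsAAdjoint A T Ts) :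
    IsSymmetricFor (CFC.sqrt A) (Ts ∘L T) := fun x y => by
  rw [comp_apply, comp_apply, hTs.inner_sqrt_apply_left hA, hTs.inner_sqrt_apply_right hA]

theorem isSymmetricFor_reA (hA : A.IsPositive) (hTs : IsAAdjoint A T Ts) :
    IsSymmetricFor (CFC.sqrt A) (ReA T Ts) := fun x y => by
  simp only [ReA, smul_apply, add_apply, map_smul, map_add, inner_smul_left, inner_smul_right,
    inner_add_left, inner_add_right, hTs.inner_sqrt_apply_left hA,
    hTs.inner_sqrt_apply_right hA, map_inv₀, map_ofNat]
  ring

theorem isSymmetricFor_imA (hA : A.IsPositive) (hTs : IsAAdjoint A T Ts) :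
    IsSymmetricFor (CFC.sqrt A) (ImA T Ts) := fun x y => by
  simp only [ImA, smul_apply, sub_apply, map_smul, map_sub, inner_smul_left, inner_smul_right,
    inner_sub_left, inner_sub_right, hTs.inner_sqrt_apply_left hA,
    hTs.inner_sqrt_apply_right hA, map_inv₀, map_mul, map_ofNat, Complex.conj_I]
  ring

theorem inner_sqrt_apply_self_eq_conj (hA : A.IsPositive) (hTs : IsAAdjoint A T Ts) (x : H) :
    ⟪CFC.sqrt A (Ts x), CFC.sqrt A x⟫_ℂ = starRingEnd ℂ ⟪CFC.sqrt A (T x), CFC.sqrt A x⟫_ℂ := by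
  rw [hTs.inner_sqrt_apply_left hA, inner_conj_symm]

theorem inner_sqrt_reA_apply_self (hA : A.IsPositive) (hTs : IsAAdjoint A T Ts) (x : H) :
    ⟪CFC.sqrt A (ReA T Ts x), CFC.sqrt A x⟫_ℂ = (⟪CFC.sqrt A (T x), CFC.sqrt A x⟫_ℂ).re := by
  simp only [ReA, smul_apply, add_apply, map_smul, map_add, inner_smul_left, inner_add_left,
    inner_sqrt_apply_self_eq_conj hA hTs, Complex.add_conj, map_inv₀, map_ofNat]
  push_cast
  ring

-- The sign: `⟪·, ·⟫` is conjugate-linear in its first argument.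
theorem inner_sqrt_imA_apply_self (hA : A.IsPositive) (hTs : IsAAdjoint A T Ts) (x : H) :
    ⟪CFC.sqrt A (ImA T Ts x), CFC.sqrt A x⟫_ℂ = -(⟪CFC.sqrt A (T x), CFC.sqrt A x⟫_ℂ).im := by
  simp only [ImA, smul_apply, sub_apply, map_smul, map_sub, inner_smul_left, inner_sub_left,
    inner_sqrt_apply_self_eq_conj hA hTs, Complex.sub_conj, map_inv₀, map_mul, map_ofNat,
    Complex.conj_I]
  push_cast
  field_simp

theorem norm_sqrt_apply_le (hA : A.IsPositive) (hTs : IsAAdjoint A T Ts) {x : H}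
    (hx : ‖CFC.sqrt A x‖ = 1) : ‖CFC.sqrt A (T x)‖ ≤ √‖Ts ∘L T‖ := by
  refine Real.le_sqrt_of_sq_le ?_
  calc ‖CFC.sqrt A (T x)‖ ^ 2 = (⟪CFC.sqrt A x, CFC.sqrt A ((Ts ∘L T) x)⟫_ℂ).re := by
        rw [comp_apply, ← hTs.inner_sqrt_apply_right hA, ← inner_self_eq_norm_sq (𝕜 := ℂ)]; rfl
    _ ≤ ‖CFC.sqrt A x‖ * ‖CFC.sqrt A ((Ts ∘L T) x)‖ :=
        (Complex.re_le_norm _).trans (norm_inner_le_norm _ _)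
    _ ≤ ‖Ts ∘L T‖ := by
        rw [hx, one_mul]
        exact (hTs.isSymmetricFor_comp hA).norm_apply_le hx

-- Needed because `wA` is a real `sSup`, which is `0` on an unbounded set.
theorem bddAbove_numericalRadiusA_set (hA : A.IsPositive) (hTs : IsAAdjoint A T Ts) :
    BddAbove {r : ℝ | ∃ x : H, vnormA A x = 1 ∧ r = ‖innA A (T x) x‖} := by
  refine ⟨√‖Ts ∘L T‖, ?_⟩
  rintro _ ⟨x, hx, rfl⟩
  rw [vnormA_eq_norm_sqrt hA] at hx
  calc ‖innA A (T x) x‖ ≤ ‖CFC.sqrt A (T x)‖ * ‖CFC.sqrt A x‖ := by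
        rw [innA_eq_inner_sqrt hA]; exact norm_inner_le_norm _ _
    _ ≤ √‖Ts ∘L T‖ := by rw [hx, mul_one]; exact hTs.norm_sqrt_apply_le hA hx

theorem opnormA_le_sqrt_two_mul_wA (hA : A.IsPositive) (hTs : IsAAdjoint A T Ts)
    {S : H →L[ℂ] H} (hS : IsSymmetricFor (CFC.sqrt A) S)
    (hST : ∀ x,
      ‖⟪CFC.sqrt A (S x), CFC.sqrt A x⟫_ℂ‖ ≤ √2 * ‖⟪CFC.sqrt A (T x), CFC.sqrt A x⟫_ℂ‖) :
    opnormA A S ≤ √2 * wA A T := by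
  have hw : ∀ x, ‖CFC.sqrt A x‖ = 1 → ‖⟪CFC.sqrt A (T x), CFC.sqrt A x⟫_ℂ‖ ≤ wA A T :=
    fun x hx => by
      rw [← vnormA_eq_norm_sqrt hA] at hx
      rw [← innA_eq_inner_sqrt hA]
      exact le_csSup (hTs.bddAbove_numericalRadiusA_set hA) ⟨x, hx, rfl⟩
  refine Real.sSup_le ?_ (mul_nonneg (Real.sqrt_nonneg 2) (Real.sSup_nonneg ?_))
  · rintro _ ⟨x, hx, rfl⟩
    rw [vnormA_eq_norm_sqrt hA] at hx ⊢
    exact hS.norm_apply_le_of_norm_inner_le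
      (fun y hy => (hST y).trans (by gcongr; exact hw y hy)) hx
  · rintro _ ⟨x, -, rfl⟩
    exact norm_nonneg _

end IsAAdjoint

end AdjointA

theorem stmt11 (A T Ts : H →L[ℂ] H) (hA : A.IsPositive) (hTs : IsAAdjoint A T Ts) :
    wA A T ≥ (1 / Real.sqrt 2) * opnormA A (ReA T Ts + ImA T Ts) ∧
      wA A T ≥ (1 / Real.sqrt 2) * opnormA A (ReA T Ts - ImA T Ts) := by
  have hRe := hTs.isSymmetricFor_reA hA
  have hIm := hTs.isSymmetricFor_imA hA
  simp only [ge_iff_le, one_div, inv_mul_le_iff₀ (by positivity : (0 : ℝ) < √2)]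
  constructor
  · refine hTs.opnormA_le_sqrt_two_mul_wA hA (hRe.add hIm) fun x => ?_
    rw [add_apply, map_add, inner_add_left, hTs.inner_sqrt_reA_apply_self hA,
      hTs.inner_sqrt_imA_apply_self hA, ← sub_eq_add_neg, ← Complex.ofReal_sub, Complex.norm_real,
      Real.norm_eq_abs]
    exact Complex.abs_re_sub_im_le _
  · refine hTs.opnormA_le_sqrt_two_mul_wA hA (hRe.sub hIm) fun x => ?_
    rw [sub_apply, map_sub, inner_sub_left, hTs.inner_sqrt_reA_apply_self hA,
      hTs.inner_sqrt_imA_apply_self hA, sub_neg_eq_add, ← Complex.ofReal_add, Complex.norm_real,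
      Real.norm_eq_abs]
    exact Complex.abs_re_add_im_le _
end
end
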